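/- arXiv:1003.2556 — 2 statements merged into one kernel-verified Lean document; each statement's English description precedes it below -/
import Mathlib

section
/- For every k ∈ {1,...,n} and every x ∈ [0,1]^n, the k-th order statistic satisfies x_{(k)} = ∑_{S ⊆ {1,...,n}, |S| ≥ n−k+1} (−1)^{|S|−n+k−1} · binom(|S|−1, n−k) · min_{i∈S} x_i. -/
/-!
Both sides are invariant under permuting the coordinates, so we may assume `x` is monotone.
Then `min_{i ∈ S} x_i = x_{min S}`. Grouping the subsets `S` by their minimum `i` and writing
`S = {i} ∪ T` with `T ⊆ Ioi i`, the coefficient of `x_i` becomes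
`∑_{T ⊆ Ioi i} (-1)^(#T - (n-k)) * C(#T, n-k)`, which is `1` if `#(Ioi i) = n - 1 - i` equals
`n - k`, i.e. `i = k - 1`, and `0` otherwise.
-/

open MeasureTheory Finset

/-- The `k`-th order statistic of `x : Fin n → ℝ`, with conventions
`oStat x 0 = 0` and `oStat x k = 1` for `k > n`. For `1 ≤ k ≤ n` it is the
`k`-th smallest coordinate of `x`. -/
noncomputable def oStat {n : ℕ} (x : Fin n → ℝ) (k : ℕ) : ℝ :=
  if k = 0 then 0
  else if k ≤ n then ((Finset.univ.val.map x).sort (· ≤ ·)).getD (k - 1) 0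
  else 1

/-- The `k`-th order statistic of the subfamily `(x i)_{i ∈ S}`. -/
noncomputable def oStatS {n : ℕ} (S : Finset (Fin n)) (x : Fin n → ℝ) (k : ℕ) : ℝ :=
  ((S.val.map x).sort (· ≤ ·)).getD (k - 1) 0

section Binomial

variable {R : Type*} [CommRing R]

theorem sum_range_neg_one_pow_mul_choose_mul_choose (m r : ℕ) :
    ∑ t ∈ range (m + 1), (-1 : R) ^ (t - r) * (m.choose t * t.choose r) =
      if m = r then 1 else 0 := by
  rcases lt_or_ge m r with hmr | hrm
  · rw [if_neg hmr.ne]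
    refine sum_eq_zero fun t ht => ?_
    rw [Nat.choose_eq_zero_of_lt (by grind : t < r)]
    simp
  obtain ⟨d, rfl⟩ := Nat.exists_eq_add_of_le hrm
  have halt : ∑ u ∈ range (d + 1), (-1 : R) ^ u * d.choose u = if d = 0 then 1 else 0 := by
    exact_mod_cast congrArg (Int.cast : ℤ → R) (Int.alternating_sum_range_choose (n := d))
  have hterm : ∀ u, (-1 : R) ^ (r + u - r) * ((r + d).choose (r + u) * (r + u).choose r) =
      (r + d).choose r * ((-1 : R) ^ u * d.choose u) := by
    intro u
    have := Nat.choose_mul (n := r + d) (k := r + u) (s := r) (by omega)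
    simp only [Nat.add_sub_cancel_left] at this ⊢
    rw [← Nat.cast_mul, this]
    push_cast
    ring
  rw [show r + d + 1 = r + (d + 1) by ring, sum_range_add,
    sum_eq_zero fun t ht => by rw [Nat.choose_eq_zero_of_lt (mem_range.1 ht)]; simp,
    zero_add, sum_congr rfl fun u _ => hterm u, ← mul_sum, halt]
  by_cases hd : d = 0 <;> simp [hd]

theorem sum_powerset_neg_one_pow_mul_choose {α : Type*} (A : Finset α) (r : ℕ) :
    ∑ T ∈ A.powerset, (-1 : R) ^ (#T - r) * (#T).choose r = if #A = r then 1 else 0 := by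
  rw [sum_powerset_apply_card fun t => (-1 : R) ^ (t - r) * t.choose r,
    ← sum_range_neg_one_pow_mul_choose_mul_choose]
  refine sum_congr rfl fun t _ => ?_
  rw [nsmul_eq_mul]
  ring

end Binomial

theorem sum_filter_nonempty_eq_sum_sum_insert_Ioi {α M : Type*} [Fintype α] [LinearOrder α]
    [LocallyFiniteOrderTop α] [AddCommMonoid M] (f : Finset α → M) :
    ∑ S ∈ univ.powerset.filter Finset.Nonempty, f S =
      ∑ i, ∑ T ∈ (Ioi i).powerset, f (insert i T) := by
  rw [sum_sigma']
  symm
  refine sum_bij (fun p _ => insert p.1 p.2) (fun p _ => by simp) ?_ ?_ (fun _ _ => rfl)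
  · rintro ⟨a, T⟩ hT ⟨b, U⟩ hU hTU
    simp only [mem_sigma, mem_univ, mem_powerset, true_and] at hT hU hTU
    have hab : a = b := by
      have ha : a ∈ insert b U := hTU ▸ mem_insert_self a T
      have hb : b ∈ insert a T := hTU ▸ mem_insert_self b U
      grind
    subst hab
    have haT : a ∉ T := fun h => lt_irrefl a (mem_Ioi.1 (hT h))
    have haU : a ∉ U := fun h => lt_irrefl a (mem_Ioi.1 (hU h))
    rw [← erase_insert haT, hTU, erase_insert haU]
  · intro S hS
    have hne : S.Nonempty := (mem_filter.1 hS).2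
    refine ⟨⟨S.min' hne, S.erase (S.min' hne)⟩, ?_, insert_erase (S.min'_mem hne)⟩
    simp only [mem_sigma, mem_univ, mem_powerset, true_and]
    intro i hi
    exact mem_Ioi.2 (lt_of_le_of_ne (S.min'_le i (mem_of_mem_erase hi)) (ne_of_mem_erase hi).symm)

variable {n : ℕ}

theorem oStat_of_monotone {k : ℕ} (hk : 1 ≤ k) (hkn : k ≤ n) {y : Fin n → ℝ}
    (hy : Monotone y) : oStat y k = y ⟨k - 1, by omega⟩ := by
  have hsort : (univ.val.map y).sort (· ≤ ·) = List.ofFn y := by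
    rw [Fin.univ_val_map, Multiset.coe_sort]
    exact List.mergeSort_eq_self _ (List.pairwise_ofFn.2 fun _ _ hij => hy hij.le)
  rw [oStat, if_neg (by omega), if_pos hkn, hsort,
    List.getD_eq_getElem _ _ (by rw [List.length_ofFn]; omega), List.getElem_ofFn]

theorem oStat_comp_perm (x : Fin n → ℝ) (σ : Equiv.Perm (Fin n)) (k : ℕ) :
    oStat (x ∘ σ) k = oStat x k := by
  rw [oStat, oStat, ← Multiset.map_map, Multiset.map_univ_val_equiv]

theorem oStatS_map_perm (S : Finset (Fin n)) (x : Fin n → ℝ) (σ : Equiv.Perm (Fin n))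
    (j : ℕ) :
    oStatS (S.map σ.toEmbedding) x j = oStatS S (x ∘ σ) j := by
  rw [oStatS, oStatS, map_val, Multiset.map_map]
  rfl

theorem oStatS_insert_one_of_forall_le {S : Finset (Fin n)} {i : Fin n} {y : Fin n → ℝ}
    (hi : i ∉ S) (hle : ∀ j ∈ S, y i ≤ y j) : oStatS (insert i S) y 1 = y i := by
  rw [oStatS, insert_val_of_notMem hi, Multiset.map_cons, Multiset.sort_cons]
  · rfl
  · simpa using hle

theorem sum_filter_card_mul_oStatS_comp_perm (x : Fin n → ℝ) (σ : Equiv.Perm (Fin n))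
    (p : ℕ → Prop) [DecidablePred p] (g : ℕ → ℝ) (j : ℕ) :
    ∑ S ∈ univ.powerset.filter (fun S => p #S), g #S * oStatS S (x ∘ σ) j =
      ∑ S ∈ univ.powerset.filter (fun S => p #S), g #S * oStatS S x j := by
  refine sum_equiv (Equiv.finsetCongr σ) (fun S => by simp) fun S _ => ?_
  rw [Equiv.finsetCongr_apply, card_map, oStatS_map_perm]

theorem sum_neg_one_pow_mul_choose_mul_oStatS_of_monotone {k : ℕ} (hk : 1 ≤ k) (hkn : k ≤ n)
    {y : Fin n → ℝ} (hy : Monotone y) :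
    ∑ S ∈ univ.powerset.filter (fun S : Finset (Fin n) => n - k + 1 ≤ #S),
      (-1 : ℝ) ^ (#S - (n - k + 1)) * ((#S - 1).choose (n - k) : ℝ) * oStatS S y 1 =
      y ⟨k - 1, by omega⟩ := by
  set F : Finset (Fin n) → ℝ :=
    fun S => (-1 : ℝ) ^ (#S - (n - k + 1)) * ((#S - 1).choose (n - k) : ℝ) * oStatS S y 1
  have hnonempty :
      ∑ S ∈ univ.powerset.filter (fun S : Finset (Fin n) => n - k + 1 ≤ #S), F S =
        ∑ S ∈ univ.powerset.filter Finset.Nonempty, F S := by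
    refine sum_subset (fun S hS => ?_) fun S hS hS' => ?_
    · simp only [mem_filter] at hS ⊢
      exact ⟨hS.1, card_pos.1 (by omega)⟩
    · simp only [mem_filter, mem_powerset, subset_univ, true_and, not_le] at hS hS'
      simp [F, Nat.choose_eq_zero_of_lt (by have := card_pos.2 hS; omega : #S - 1 < n - k)]
  have hinsert : ∀ i, ∀ T ∈ (Ioi i).powerset,
      F (insert i T) = (-1 : ℝ) ^ (#T - (n - k)) * (#T).choose (n - k) * y i := by
    intro i T hT
    have hiT : i ∉ T := fun h => lt_irrefl i (mem_Ioi.1 (mem_powerset.1 hT h))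
    dsimp only [F]
    rw [card_insert_of_notMem hiT, oStatS_insert_one_of_forall_le hiT
      fun j hj => hy (mem_Ioi.1 (mem_powerset.1 hT hj)).le]
    congr 3; omega
  rw [hnonempty, sum_filter_nonempty_eq_sum_sum_insert_Ioi]
  calc ∑ i, ∑ T ∈ (Ioi i).powerset, _
      = ∑ i : Fin n, (if n - 1 - (i : ℕ) = n - k then 1 else 0) * y i := by
        refine sum_congr rfl fun i _ => ?_
        rw [sum_congr rfl (hinsert i), ← sum_mul, sum_powerset_neg_one_pow_mul_choose,
          Fin.card_Ioi]
    _ = y ⟨k - 1, by omega⟩ := by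
        refine (Fintype.sum_eq_single ⟨k - 1, by omega⟩ fun i hi => ?_).trans ?_
        · rw [if_neg fun h => hi (Fin.ext (by simp; omega)), zero_mul]
        · rw [if_pos (by dsimp only; omega), one_mul]

theorem stmt5_general (n k : ℕ) (hk : 1 ≤ k) (hkn : k ≤ n)
    (x : Fin n → ℝ) :
    oStat x k = ∑ S ∈ Finset.univ.powerset.filter
        (fun S : Finset (Fin n) => n - k + 1 ≤ S.card),
      (-1 : ℝ) ^ (S.card - (n - k + 1)) * (Nat.choose (S.card - 1) (n - k) : ℝ) *
        oStatS S x 1 := by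
  have hsorted := Tuple.monotone_sort x
  rw [← oStat_comp_perm x (Tuple.sort x), oStat_of_monotone hk hkn hsorted,
    ← sum_neg_one_pow_mul_choose_mul_oStatS_of_monotone hk hkn hsorted]
  exact sum_filter_card_mul_oStatS_comp_perm x (Tuple.sort x) (n - k + 1 ≤ ·)
    (fun c => (-1 : ℝ) ^ (c - (n - k + 1)) * ((c - 1).choose (n - k) : ℝ)) 1

theorem stmt5 (n k : ℕ) (hk : 1 ≤ k) (hkn : k ≤ n)
    (x : Fin n → ℝ) (hx : x ∈ Set.Icc (0 : Fin n → ℝ) 1) :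
    oStat x k = ∑ S ∈ Finset.univ.powerset.filter
        (fun S : Finset (Fin n) => n - k + 1 ≤ S.card),
      (-1 : ℝ) ^ (S.card - (n - k + 1)) * (Nat.choose (S.card - 1) (n - k) : ℝ) *
        oStatS S x 1 :=
  stmt5_general n k hk hkn x
end

section
/- Define h_k : [0,1]^n → ℝ by h_k(x) = (n+1)(n+2)·(x_{(k+1)} − x_{(k)})·(x_{(k)} − x_{(k−1)}), with the conventions x_{(0)} = 0 and x_{(n+1)} = 1. Then h_k is nonnegative and ∫_{[0,1]^n} h_k(x) dx = 1, i.e., h_k is a probability density function on the unit cube. -/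
open MeasureTheory Finset

/-!
For `x` in the cube and `s ∈ [0, 1)`, `x₍ⱼ₎ ≤ s` iff at least `j` coordinates of `x` are `≤ s`, so
the spacing `x₍ⱼ₊₁₎ - x₍ⱼ₎` is the length of the set of `s ∈ [0, 1)` at which exactly `j`
coordinates are `≤ s`. The product of the two spacings at `k` is therefore the area of a set of
pairs `(s, t)`, and by Tonelli its integral over the cube is the integral over `t < s` of the
volume of `{x | exactly k - 1 coordinates are ≤ t and exactly k are ≤ s}`. That set is a disjoint
union of `C(n, k - 1) (n - k + 1)` boxes of volume `t ^ (k - 1) (s - t) (1 - s) ^ (n - k)`, and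
a Beta integral turns the result into `1 / ((n + 1) (n + 2))`.
-/

open scoped Nat

theorem List.Pairwise.getElem_le_iff_lt_countP {α : Type*} [LinearOrder α] {l : List α}
    (hl : l.Pairwise (· ≤ ·)) {j : ℕ} (hj : j < l.length) (s : α) :
    l[j] ≤ s ↔ j < l.countP (· ≤ s) := by
  induction l generalizing j with
  | nil => simp at hj
  | cons a l ih =>
    rw [List.pairwise_cons] at hl
    by_cases has : a ≤ s
    · rcases j with _ | j
      · simp [has]
      · simp [has, ih hl.2 (Nat.lt_of_succ_lt_succ hj)]
    · have hl_gt : ∀ b ∈ l, s < b := fun b hb => (not_le.mp has).trans_le (hl.1 b hb)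
      have hzero : l.countP (· ≤ s) = 0 := List.countP_eq_zero.mpr fun b hb => by
        simpa using hl_gt b hb
      rcases j with _ | j
      · simp [has, hzero]
      · simp [has, hzero, hl_gt _ (List.getElem_mem _)]

noncomputable def countLe {n : ℕ} (x : Fin n → ℝ) (s : ℝ) : ℕ := #{i | x i ≤ s}

section OrderStatistics

variable {n : ℕ} {x : Fin n → ℝ}

theorem countLe_le (x : Fin n → ℝ) (s : ℝ) : countLe x s ≤ n :=
  (card_filter_le _ _).trans_eq (card_fin n)

theorem countLe_mono (x : Fin n → ℝ) : Monotone (countLe x) := fun _ _ hst =>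
  card_le_card fun i hi => by simp only [mem_filter] at hi ⊢; exact ⟨hi.1, hi.2.trans hst⟩

theorem oStat_le_iff {j : ℕ} (hj : 1 ≤ j) (hjn : j ≤ n) (s : ℝ) :
    oStat x j ≤ s ↔ j ≤ countLe x s := by
  set l := (univ.val.map x).sort (· ≤ ·)
  have hlen : j - 1 < l.length := by simp [l]; omega
  have hcount : l.countP (· ≤ s) = countLe x s := by
    rw [← Multiset.coe_countP, Multiset.sort_eq, Multiset.countP_map]; rfl
  rw [oStat, if_neg (by omega), if_pos hjn, List.getD_eq_getElem _ _ hlen,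
    (Multiset.pairwise_sort _ _).getElem_le_iff_lt_countP hlen, hcount]
  omega

theorem oStat_le_iff_of_mem_Ico {s : ℝ} (hs : s ∈ Set.Ico 0 1) (j : ℕ) :
    oStat x j ≤ s ↔ j ≤ countLe x s := by
  rcases Nat.eq_zero_or_pos j with rfl | hj
  · simpa [oStat] using hs.1
  rcases le_or_gt j n with hjn | hjn
  · exact oStat_le_iff hj hjn s
  · simp only [oStat, if_neg hj.ne', if_neg hjn.not_ge, hs.2.not_ge, false_iff, not_le]
    exact (countLe_le x s).trans_lt hjn

theorem countLe_eq_iff_mem_Ico {s : ℝ} (hs : s ∈ Set.Ico 0 1) (j : ℕ) :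
    countLe x s = j ↔ s ∈ Set.Ico (oStat x j) (oStat x (j + 1)) := by
  rw [Set.mem_Ico, oStat_le_iff_of_mem_Ico hs, ← not_le, oStat_le_iff_of_mem_Ico hs]
  omega

theorem countLe_of_lt_zero (hx : x ∈ Set.Icc 0 1) {s : ℝ} (hs : s < 0) : countLe x s = 0 :=
  card_eq_zero.mpr <| filter_eq_empty_iff.mpr fun i _ => (hs.trans_le (hx.1 i)).not_ge

theorem countLe_one (hx : x ∈ Set.Icc 0 1) : countLe x 1 = n := by
  rw [countLe, filter_true_of_mem fun i _ => show x i ≤ 1 from hx.2 i, card_univ,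
    Fintype.card_fin]

theorem oStat_nonneg (hx : x ∈ Set.Icc 0 1) (j : ℕ) : 0 ≤ oStat x j := by
  by_contra! hneg
  have hj : j ≠ 0 := by rintro rfl; simp [oStat] at hneg
  have hjn : j ≤ n := by by_contra h; simp [oStat, hj, h] at hneg; linarith
  have := (oStat_le_iff (x := x) (by omega) hjn _).mp le_rfl
  rw [countLe_of_lt_zero hx hneg] at this
  omega

theorem oStat_le_one (hx : x ∈ Set.Icc 0 1) (j : ℕ) : oStat x j ≤ 1 := by
  rcases Nat.eq_zero_or_pos j with rfl | hj
  · simp [oStat]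
  rcases le_or_gt j n with hjn | hjn
  · exact (oStat_le_iff hj hjn 1).mpr ((countLe_one hx).symm ▸ hjn)
  · simp [oStat, hj.ne', hjn.not_ge]

theorem oStat_le_succ (hx : x ∈ Set.Icc 0 1) (j : ℕ) : oStat x j ≤ oStat x (j + 1) := by
  rcases (oStat_le_one hx (j + 1)).lt_or_eq with hlt | heq
  · have hs : oStat x (j + 1) ∈ Set.Ico 0 1 := ⟨oStat_nonneg hx _, hlt⟩
    exact (oStat_le_iff_of_mem_Ico hs j).mpr
      (Nat.le_of_succ_le ((oStat_le_iff_of_mem_Ico hs _).mp le_rfl))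
  · exact heq ▸ oStat_le_one hx j

theorem Ico_inter_countLe_eq (hx : x ∈ Set.Icc 0 1) (j : ℕ) :
    Set.Ico 0 1 ∩ {s | countLe x s = j} = Set.Ico (oStat x j) (oStat x (j + 1)) := by
  ext s
  refine ⟨fun ⟨hs, h⟩ => (countLe_eq_iff_mem_Ico hs j).mp h, fun h => ?_⟩
  have hs : s ∈ Set.Ico 0 1 :=
    ⟨(oStat_nonneg hx j).trans h.1, h.2.trans_le (oStat_le_one hx _)⟩
  exact ⟨hs, (countLe_eq_iff_mem_Ico hs j).mpr h⟩

end OrderStatistics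

section Measurability

variable {n : ℕ}

theorem measurable_countLe : Measurable fun p : (Fin n → ℝ) × ℝ => countLe p.1 p.2 := by
  simp_rw [countLe, card_filter]
  exact Finset.measurable_sum _ fun i _ =>
    Measurable.ite (measurableSet_le (measurable_pi_apply i |>.comp measurable_fst) measurable_snd)
      measurable_const measurable_const

theorem measurable_oStat (j : ℕ) : Measurable fun x : Fin n → ℝ => oStat x j := by
  rcases Nat.eq_zero_or_pos j with rfl | hj
  · simp [oStat]
  rcases le_or_gt j n with hjn | hjn
  · refine measurable_of_Iic fun s => ?_
    have : (fun x : Fin n → ℝ => oStat x j) ⁻¹' Set.Iic s = {x | j ≤ countLe x s} := by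
      ext x; exact oStat_le_iff hj hjn s
    rw [this]
    exact (measurable_countLe.comp (measurable_id.prodMk measurable_const)) measurableSet_Ici
  · simp [oStat, hj.ne', hjn.not_ge]

end Measurability

def layerBox {n : ℕ} (A : Finset (Fin n)) (i : Fin n) (t s : ℝ) : Set (Fin n → ℝ) :=
  Set.univ.pi fun j => if j ∈ A then Set.Icc 0 t else if j = i then Set.Ioc t s else Set.Ioc s 1

section Boxes

variable {n : ℕ} {A : Finset (Fin n)} {i : Fin n} {s t : ℝ}

theorem mem_layerBox_iff (ht : 0 ≤ t) (hts : t < s) (hs : s ≤ 1) {x : Fin n → ℝ} :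
    x ∈ layerBox A i t s ↔ x ∈ Set.Icc 0 1 ∧
      ({j | x j ≤ t} : Finset (Fin n)) = A ∧ ({j | x j ≤ s} : Finset (Fin n)) = insert i A := by
  have hcoord : ∀ j, x j ∈ (if j ∈ A then Set.Icc 0 t else if j = i then Set.Ioc t s
      else Set.Ioc s 1) ↔
        (0 ≤ x j ∧ x j ≤ 1) ∧ (x j ≤ t ↔ j ∈ A) ∧ (x j ≤ s ↔ j ∈ insert i A) := by
    intro j
    split_ifs <;> grind
  simp only [layerBox, Set.mem_univ_pi, hcoord, forall_and, Finset.ext_iff, mem_filter, mem_univ,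
    true_and, Set.mem_Icc, Pi.le_def, Pi.zero_apply, Pi.one_apply]

theorem volume_layerBox (hiA : i ∉ A) :
    volume (layerBox A i t s) =
      ENNReal.ofReal t ^ #A * ENNReal.ofReal (s - t) * ENNReal.ofReal (1 - s) ^ (n - (#A + 1)) := by
  have hvol : ∀ j, volume (if j ∈ A then Set.Icc 0 t else if j = i then Set.Ioc t s
      else Set.Ioc s 1) = if j ∈ A then ENNReal.ofReal t else if j = i then ENNReal.ofReal (s - t)
      else ENNReal.ofReal (1 - s) := by
    intro j; split_ifs <;> simp [Real.volume_Icc, Real.volume_Ioc]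
  have hA : ∏ j ∈ A, (if j ∈ A then ENNReal.ofReal t else if j = i then ENNReal.ofReal (s - t)
      else ENNReal.ofReal (1 - s)) = ENNReal.ofReal t ^ #A := by
    rw [prod_congr rfl fun j hj => if_pos hj, prod_const]
  have hAc : ∏ j ∈ (insert i A)ᶜ, (if j ∈ A then ENNReal.ofReal t
      else if j = i then ENNReal.ofReal (s - t) else ENNReal.ofReal (1 - s)) =
      ENNReal.ofReal (1 - s) ^ (n - (#A + 1)) := by
    rw [prod_congr rfl fun j hj => ?_, prod_const, card_compl, card_insert_of_notMem hiA,
      Fintype.card_fin]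
    rw [mem_compl, mem_insert, not_or] at hj
    rw [if_neg hj.2, if_neg hj.1]
  rw [layerBox, volume_pi_pi]
  simp_rw [hvol]
  rw [← union_compl (insert i A), prod_union disjoint_compl_right, prod_insert hiA, if_neg hiA,
    if_pos rfl, hA, hAc]
  ring

theorem cube_inter_countLe_eq_biUnion (ht : 0 ≤ t) (hts : t < s) (hs : s ≤ 1) (m : ℕ) :
    Set.Icc 0 1 ∩ {x : Fin n → ℝ | countLe x t = m ∧ countLe x s = m + 1} =
      ⋃ p ∈ (powersetCard m univ).sigma fun A => Aᶜ, layerBox p.1 p.2 t s := by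
  ext x
  simp only [Set.mem_inter_iff, Set.mem_ofPred_eq, Set.mem_iUnion, mem_sigma, mem_powersetCard,
    mem_compl, exists_prop, Sigma.exists, mem_layerBox_iff ht hts hs, countLe]
  constructor
  · rintro ⟨hx, hct, hcs⟩
    have hsub : ({j | x j ≤ t} : Finset (Fin n)) ⊆ ({j | x j ≤ s} : Finset (Fin n)) :=
      fun j hj => mem_filter.mpr ⟨mem_univ j, (mem_filter.mp hj).2.trans hts.le⟩
    obtain ⟨i, hi, hins⟩ := exists_eq_insert_iff.mpr ⟨hsub, by omega⟩
    exact ⟨_, i, ⟨⟨subset_univ _, hct⟩, hi⟩, hx, rfl, hins.symm⟩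
  · rintro ⟨A, i, ⟨⟨-, hA⟩, hiA⟩, hx, hAt, hAs⟩
    exact ⟨hx, hAt ▸ hA, by rw [hAs, card_insert_of_notMem hiA, hA]⟩

theorem volume_cube_inter_countLe (ht : 0 ≤ t) (hts : t < s) (hs : s ≤ 1) (m : ℕ) :
    volume (Set.Icc 0 1 ∩ {x : Fin n → ℝ | countLe x t = m ∧ countLe x s = m + 1}) =
      ENNReal.ofReal
        ((n.choose m * (n - m) : ℕ) * (t ^ m * (s - t)) * (1 - s) ^ (n - (m + 1))) := by
  have hdisj : (↑((powersetCard m univ).sigma fun A : Finset (Fin n) => Aᶜ) :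
      Set ((_ : Finset (Fin n)) × Fin n)).PairwiseDisjoint fun p => layerBox p.1 p.2 t s := by
    rintro ⟨A, i⟩ hp ⟨B, j⟩ - hne
    refine Set.disjoint_left.mpr fun x hxA hxB => hne ?_
    rw [mem_layerBox_iff ht hts hs] at hxA hxB
    obtain rfl : A = B := hxA.2.1.symm.trans hxB.2.1
    have hiA : i ∉ A := mem_compl.mp (mem_sigma.mp hp).2
    have hij : i ∈ insert j A := hxB.2.2 ▸ hxA.2.2 ▸ mem_insert_self i A
    rw [(mem_insert.mp hij).resolve_right hiA]
  have hmeas : ∀ p : (_ : Finset (Fin n)) × Fin n, MeasurableSet (layerBox p.1 p.2 t s) :=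
    fun p => MeasurableSet.univ_pi fun j => by split_ifs <;> measurability
  rw [cube_inter_countLe_eq_biUnion ht hts hs, measure_biUnion_finset hdisj fun p _ => hmeas p,
    sum_congr rfl fun p hp => by
      obtain ⟨hA, hiA⟩ := mem_sigma.mp hp
      rw [volume_layerBox (mem_compl.mp hiA), (mem_powersetCard.mp hA).2],
    sum_const, card_sigma, sum_congr rfl fun A hA => by
      rw [card_compl, Fintype.card_fin, (mem_powersetCard.mp hA).2],
    sum_const, card_powersetCard, card_univ, Fintype.card_fin, nsmul_eq_mul, smul_eq_mul,
    ENNReal.ofReal_mul (by positivity), ENNReal.ofReal_mul (by positivity),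
    ENNReal.ofReal_mul (by positivity), ENNReal.ofReal_natCast, ENNReal.ofReal_pow ht,
    ENNReal.ofReal_pow (sub_nonneg.mpr hs)]
  ring

end Boxes

theorem lintegral_Ico_ofReal_eq_intervalIntegral {f : ℝ → ℝ} {a b : ℝ} (hab : a ≤ b)
    (hf : ContinuousOn f (Set.Icc a b)) (hf₀ : ∀ x ∈ Set.Ico a b, 0 ≤ f x) :
    ∫⁻ x in Set.Ico a b, ENNReal.ofReal (f x) = ENNReal.ofReal (∫ x in a..b, f x) := by
  rw [intervalIntegral.integral_of_le hab, integral_Ioc_eq_integral_Ioo,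
    ← integral_Ico_eq_integral_Ioo, ofReal_integral_eq_lintegral_ofReal
      ((hf.integrableOn_Icc).mono_set Set.Ico_subset_Icc_self)
      ((ae_restrict_iff' measurableSet_Ico).mpr (.of_forall hf₀))]

theorem integral_pow_mul_one_sub_pow (a b : ℕ) :
    ∫ x in (0 : ℝ)..1, x ^ a * (1 - x) ^ b = (a ! * b ! : ℝ) / (a + b + 1)! := by
  induction b generalizing a with
  | zero =>
    simp only [pow_zero, mul_one, integral_pow, one_pow, zero_pow (Nat.succ_ne_zero a), sub_zero,
      Nat.factorial_zero, add_zero, Nat.factorial_succ]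
    push_cast
    field_simp
  | succ b ih =>
    have hsplit : ∀ x : ℝ,
        x ^ a * (1 - x) ^ (b + 1) = x ^ a * (1 - x) ^ b - x ^ (a + 1) * (1 - x) ^ b :=
      fun x => by ring
    simp_rw [hsplit]
    rw [intervalIntegral.integral_sub (Continuous.intervalIntegrable (by fun_prop) _ _)
        (Continuous.intervalIntegrable (by fun_prop) _ _), ih, ih,
      show a + 1 + b + 1 = a + b + 1 + 1 by ring, show a + (b + 1) + 1 = a + b + 1 + 1 by ring]
    simp only [Nat.factorial_succ]
    push_cast
    field_simp
    ring

theorem integral_pow_mul_sub (m : ℕ) (s : ℝ) :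
    ∫ t in (0 : ℝ)..s, t ^ m * (s - t) = s ^ (m + 2) / ((m + 1) * (m + 2)) := by
  simp_rw [mul_sub, fun t : ℝ => show t ^ m * s = s * t ^ m from mul_comm _ _, ← pow_succ]
  rw [intervalIntegral.integral_sub (Continuous.intervalIntegrable (by fun_prop) _ _)
      (Continuous.intervalIntegrable (by fun_prop) _ _), intervalIntegral.integral_const_mul,
    integral_pow, integral_pow]
  push_cast
  field_simp
  ring

theorem integral_choose_mul_pow_mul_one_sub_pow {n m : ℕ} (hm : m < n) :
    ∫ s in (0 : ℝ)..1, ((n.choose m * (n - m) : ℕ) : ℝ) / ((m + 1) * (m + 2)) *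
        (s ^ (m + 2) * (1 - s) ^ (n - (m + 1))) = 1 / ((n + 1) * (n + 2)) := by
  obtain ⟨r, rfl⟩ := Nat.exists_eq_add_of_lt hm
  rw [intervalIntegral.integral_const_mul, integral_pow_mul_one_sub_pow,
    show m + r + 1 - (m + 1) = r by omega, show m + 2 + r + 1 = m + r + 1 + 2 by ring]
  simp only [Nat.cast_mul, Nat.cast_choose ℝ (show m ≤ m + r + 1 by omega),
    show m + r + 1 - m = r + 1 by omega, Nat.factorial_succ]
  push_cast
  field_simp
  ring

section Spacings

variable {n : ℕ}

theorem ofReal_spacing_eq_volume {x : Fin n → ℝ} (hx : x ∈ Set.Icc 0 1) (j : ℕ) :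
    ENNReal.ofReal (oStat x (j + 1) - oStat x j) =
      volume.restrict (Set.Ico 0 1) {s | countLe x s = j} := by
  rw [Measure.restrict_apply' measurableSet_Ico, Set.inter_comm, Ico_inter_countLe_eq hx,
    Real.volume_Ico]

theorem spacing_mul_spacing_nonneg {x : Fin n → ℝ} (hx : x ∈ Set.Icc 0 1) (m : ℕ) :
    0 ≤ (oStat x (m + 2) - oStat x (m + 1)) * (oStat x (m + 1) - oStat x m) :=
  mul_nonneg (sub_nonneg.mpr (oStat_le_succ hx _)) (sub_nonneg.mpr (oStat_le_succ hx _))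

theorem lintegral_spacing_mul_spacing_eq (m : ℕ) :
    ∫⁻ x in Set.Icc (0 : Fin n → ℝ) 1,
        ENNReal.ofReal ((oStat x (m + 2) - oStat x (m + 1)) * (oStat x (m + 1) - oStat x m)) =
      ∫⁻ s in Set.Ico 0 1, ∫⁻ t in Set.Ico 0 1,
        volume (Set.Icc 0 1 ∩ {x : Fin n → ℝ | countLe x t = m ∧ countLe x s = m + 1}) := by
  set μ := volume.restrict (Set.Icc (0 : Fin n → ℝ) 1)
  set ν := (volume.restrict (Set.Ico (0 : ℝ) 1)).prod (volume.restrict (Set.Ico (0 : ℝ) 1))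
  set T := {p : (Fin n → ℝ) × ℝ × ℝ | countLe p.1 p.2.2 = m ∧ countLe p.1 p.2.1 = m + 1}
  have hT : MeasurableSet T := by
    have h : ∀ j (f : (Fin n → ℝ) × ℝ × ℝ → ℝ), Measurable f →
        MeasurableSet {p : (Fin n → ℝ) × ℝ × ℝ | countLe p.1 (f p) = j} := fun j f hf =>
      (measurable_countLe.comp (measurable_fst.prodMk hf)) (measurableSet_singleton j)
    exact (h m _ (measurable_snd.comp measurable_snd)).inter
      (h _ _ (measurable_fst.comp measurable_snd))
  calc ∫⁻ x in Set.Icc (0 : Fin n → ℝ) 1,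
        ENNReal.ofReal ((oStat x (m + 2) - oStat x (m + 1)) * (oStat x (m + 1) - oStat x m))
      = ∫⁻ x, ν (Prod.mk x ⁻¹' T) ∂μ := by
        refine setLIntegral_congr_fun measurableSet_Icc fun x hx => ?_
        have hslice : Prod.mk x ⁻¹' T = {s | countLe x s = m + 1} ×ˢ {t | countLe x t = m} := by
          ext; exact and_comm
        rw [hslice, Measure.prod_prod, ENNReal.ofReal_mul (sub_nonneg.mpr (oStat_le_succ hx _)),
          ofReal_spacing_eq_volume hx, ofReal_spacing_eq_volume hx]
    _ = μ.prod ν T := (Measure.prod_apply hT).symm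
    _ = ∫⁻ y, μ ((·, y) ⁻¹' T) ∂ν := Measure.prod_apply_symm hT
    _ = _ := by
        rw [lintegral_prod _ (measurable_measure_prodMk_right hT).aemeasurable]
        simp only [μ, Measure.restrict_apply' measurableSet_Icc, Set.inter_comm]
        rfl

theorem lintegral_lintegral_volume_cube_inter_countLe {m : ℕ} (hm : m < n) :
    ∫⁻ s in Set.Ico 0 1, ∫⁻ t in Set.Ico 0 1,
        volume (Set.Icc 0 1 ∩ {x : Fin n → ℝ | countLe x t = m ∧ countLe x s = m + 1}) =
      ENNReal.ofReal (1 / ((n + 1) * (n + 2))) := by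
  set C : ℝ := ((n.choose m * (n - m) : ℕ) : ℝ)
  have hinner : ∀ s ∈ Set.Ico (0 : ℝ) 1, ∫⁻ t in Set.Ico 0 1,
      volume (Set.Icc 0 1 ∩ {x : Fin n → ℝ | countLe x t = m ∧ countLe x s = m + 1}) =
      ENNReal.ofReal (C / ((m + 1) * (m + 2)) * (s ^ (m + 2) * (1 - s) ^ (n - (m + 1)))) := by
    intro s hs
    have hslice : ∀ t ∈ Set.Ico (0 : ℝ) 1,
        volume (Set.Icc 0 1 ∩ {x : Fin n → ℝ | countLe x t = m ∧ countLe x s = m + 1}) =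
        (Set.Iio s).indicator
          (fun t => ENNReal.ofReal (C * (t ^ m * (s - t)) * (1 - s) ^ (n - (m + 1)))) t := by
      intro t ht
      by_cases hts : t < s
      · rw [Set.indicator_of_mem (show t ∈ Set.Iio s from hts),
          volume_cube_inter_countLe ht.1 hts hs.2.le]
      · rw [Set.indicator_of_notMem (show t ∉ Set.Iio s from hts)]
        have hempty : {x : Fin n → ℝ | countLe x t = m ∧ countLe x s = m + 1} = ∅ :=
          Set.eq_empty_of_forall_notMem fun x ⟨hxt, hxs⟩ => by
            have := countLe_mono x (not_lt.mp hts)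
            omega
        rw [hempty, Set.inter_empty, measure_empty]
    have hC : 0 ≤ C := Nat.cast_nonneg _
    rw [setLIntegral_congr_fun measurableSet_Ico hslice, lintegral_indicator measurableSet_Iio,
      Measure.restrict_restrict measurableSet_Iio, Set.inter_comm, Set.Ico_inter_Iio,
      min_eq_right hs.2.le,
      lintegral_Ico_ofReal_eq_intervalIntegral hs.1 (by fun_prop) fun t ht =>
        mul_nonneg (mul_nonneg hC (mul_nonneg (pow_nonneg ht.1 _) (sub_nonneg.mpr ht.2.le)))
          (pow_nonneg (sub_nonneg.mpr hs.2.le) _),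
      intervalIntegral.integral_mul_const, intervalIntegral.integral_const_mul,
      integral_pow_mul_sub]
    ring_nf
  rw [setLIntegral_congr_fun measurableSet_Ico hinner,
    lintegral_Ico_ofReal_eq_intervalIntegral zero_le_one (by fun_prop) fun s hs => by
      have := hs.1; have := hs.2; positivity,
    integral_choose_mul_pow_mul_one_sub_pow hm]

theorem integral_spacing_mul_spacing {m : ℕ} (hm : m < n) :
    ∫ x in Set.Icc (0 : Fin n → ℝ) 1,
        (oStat x (m + 2) - oStat x (m + 1)) * (oStat x (m + 1) - oStat x m) =
      1 / ((n + 1) * (n + 2)) := by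
  have hmeas : Measurable fun x : Fin n → ℝ =>
      (oStat x (m + 2) - oStat x (m + 1)) * (oStat x (m + 1) - oStat x m) := by
    have := measurable_oStat (n := n); fun_prop
  rw [integral_eq_lintegral_of_nonneg_ae ((ae_restrict_iff' measurableSet_Icc).mpr
      (.of_forall fun x hx => spacing_mul_spacing_nonneg hx m)) hmeas.aestronglyMeasurable,
    lintegral_spacing_mul_spacing_eq, lintegral_lintegral_volume_cube_inter_countLe hm, ENNReal.toReal_ofReal (by positivity)]

end Spacings

theorem stmt8_general (n k : ℕ) (hk : 1 ≤ k) (hkn : k ≤ n) :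
    (∀ x ∈ Set.Icc (0 : Fin n → ℝ) 1,
      0 ≤ ((n : ℝ) + 1) * ((n : ℝ) + 2) * (oStat x (k + 1) - oStat x k) *
        (oStat x k - oStat x (k - 1))) ∧
    (∫ x in Set.Icc (0 : Fin n → ℝ) 1,
      ((n : ℝ) + 1) * ((n : ℝ) + 2) * (oStat x (k + 1) - oStat x k) *
        (oStat x k - oStat x (k - 1))) = 1 := by
  obtain ⟨m, rfl⟩ := Nat.exists_eq_add_of_le' hk
  simp only [Nat.add_sub_cancel, mul_assoc]
  refine ⟨fun x hx => ?_, ?_⟩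
  · exact mul_nonneg (by positivity) (mul_nonneg (by positivity) (spacing_mul_spacing_nonneg hx m))
  · rw [integral_const_mul, integral_const_mul, integral_spacing_mul_spacing (by omega)]
    field_simp

theorem stmt8 (n k : ℕ) (hn : 1 ≤ n) (hk : 1 ≤ k) (hkn : k ≤ n) :
    (∀ x ∈ Set.Icc (0 : Fin n → ℝ) 1,
      0 ≤ ((n : ℝ) + 1) * ((n : ℝ) + 2) * (oStat x (k + 1) - oStat x k) *
        (oStat x k - oStat x (k - 1))) ∧
    (∫ x in Set.Icc (0 : Fin n → ℝ) 1,
      ((n : ℝ) + 1) * ((n : ℝ) + 2) * (oStat x (k + 1) - oStat x k) *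
        (oStat x k - oStat x (k - 1))) = 1 :=
  stmt8_general n k hk hkn
end
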